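/- Let Γ ⊂ [0, 1/2] be a finite set, K ≥ 1, and for each t let P_t be any probability mass function on Γ × {1,...,K} with E_{P_t}[η] > 0. Let l_t ∈ [0,1]^K be loss vectors, w_t^k = E_{P_t}[η·1{expert = k}] / E_{P_t}[η], r_t^k = Σ_j w_t^j l_t^j − l_t^k, and f̂_t(η,k) = −η r_t^k + η² (r_t^k)². Then for every probability mass function Q on Γ × {1,...,K} and every contiguous interval I = [I1, I2] of rounds: E_Q[η R_I^k] ≤ E_Q[η² V_I^k] + S_I^Q, where R_I^k = Σ_{t=I1}^{I2} r_t^k, V_I^k = Σ_{t=I1}^{I2} (r_t^k)², and S_I^Q = −Σ_{t=I1}^{I2} ln E_{P_t}[e^{−f̂_t(η,k)}] − E_Q[Σ_{t=I1}^{I2} f̂_t(η,k)]. -/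

import Mathlib

lemma exp_sub_sq_le_one_add {x : ℝ} (h : |x| ≤ 1/2) : Real.exp (x - x^2) ≤ 1 + x := by
  rw [abs_le] at h
  rcases le_or_gt 0 x with hx | hx
  · set t := x - x^2 with ht
    have h3 : (0:ℝ) < 1 - t := by nlinarith
    have h1 : Real.exp t * (1 - t) ≤ 1 := by
      have := Real.add_one_le_exp (-t)
      calc Real.exp t * (1 - t) ≤ Real.exp t * Real.exp (-t) := by
            apply mul_le_mul_of_nonneg_left (by linarith) (Real.exp_pos t).le
        _ = 1 := by rw [← Real.exp_add]; simp
    have h2 : 1 ≤ (1 + x) * (1 - t) := by nlinarith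
    nlinarith [Real.exp_pos t]
  · set z := x^2 - x with hz
    have hz0 : 0 ≤ z := by nlinarith
    have hzexp : 1 + z + z^2/2 ≤ Real.exp z := by
      have := Real.sum_le_exp_of_nonneg hz0 3
      simp [Finset.sum_range_succ] at this
      norm_num at this ⊢
      linarith
    have h3 : (0:ℝ) < 1 + z + z^2/2 := by nlinarith
    have h1 : Real.exp (-z) * (1 + z + z^2/2) ≤ 1 := by
      calc Real.exp (-z) * (1 + z + z^2/2) ≤ Real.exp (-z) * Real.exp z := by
            apply mul_le_mul_of_nonneg_left hzexp (Real.exp_pos _).le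
        _ = 1 := by rw [← Real.exp_add]; simp
    have h2 : 1 ≤ (1 + x) * (1 + z + z^2/2) := by nlinarith
    have hxz : x - x^2 = -z := by ring
    rw [hxz]
    nlinarith [Real.exp_pos (-z)]

/-- Interval version of the surrogate-regret lemma. Let `Γ ⊂ [0, 1/2]` be a finite set of
learning rates and `K ≥ 1` the number of experts. For any probability mass functions `P t`
on `Γ × Fin K` with `E_{P t}[η] > 0`, losses `l t k ∈ [0,1]`, weights
`w t k = E_{P t}[η·1{expert = k}] / E_{P t}[η]`, instantaneous regrets
`r t k = Σ_j (w t j)(l t j) − l t k` and surrogate losses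
`f̂ t (η,k) = −η r t k + η² (r t k)²`, every probability mass function `Q` on `Γ × Fin K`
and every contiguous interval `I = [I1, I2]` of rounds satisfy
`E_Q[η R_I^k] ≤ E_Q[η² V_I^k] + S_I^Q`, where `R_I^k = Σ_{t=I1}^{I2} r t k`,
`V_I^k = Σ_{t=I1}^{I2} (r t k)²` and
`S_I^Q = −Σ_{t=I1}^{I2} ln E_{P t}[e^{−f̂ t}] − E_Q[Σ_{t=I1}^{I2} f̂ t]`. -/
theorem expected_interval_regret_le_variance_add_surrogate_regret
    (Γ : Finset ℝ) (hΓ : ∀ η ∈ Γ, η ∈ Set.Icc (0 : ℝ) (1 / 2))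
    (K : ℕ) (hK : 1 ≤ K)
    (P : ℕ → ℝ → Fin K → ℝ)
    (hP0 : ∀ t η k, 0 ≤ P t η k)
    (hP1 : ∀ t, ∑ η ∈ Γ, ∑ k, P t η k = 1)
    (hPη : ∀ t, 0 < ∑ η ∈ Γ, ∑ k, P t η k * η)
    (l : ℕ → Fin K → ℝ) (hl : ∀ t k, l t k ∈ Set.Icc (0 : ℝ) 1)
    (w : ℕ → Fin K → ℝ)
    (hw : ∀ t k, w t k = (∑ η ∈ Γ, P t η k * η) / ∑ η ∈ Γ, ∑ j, P t η j * η)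
    (r : ℕ → Fin K → ℝ)
    (hr : ∀ t k, r t k = (∑ j, w t j * l t j) - l t k)
    (Q : ℝ → Fin K → ℝ) (hQ0 : ∀ η k, 0 ≤ Q η k) (hQ1 : ∑ η ∈ Γ, ∑ k, Q η k = 1)
    (I1 I2 : ℕ) (hI1 : 1 ≤ I1) (hI12 : I1 ≤ I2) :
    ∑ η ∈ Γ, ∑ k, Q η k * (η * ∑ t ∈ Finset.Icc I1 I2, r t k) ≤
      (∑ η ∈ Γ, ∑ k, Q η k * (η ^ 2 * ∑ t ∈ Finset.Icc I1 I2, (r t k) ^ 2)) +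
        ((-∑ t ∈ Finset.Icc I1 I2, Real.log (∑ η ∈ Γ, ∑ k,
            P t η k * Real.exp (-(-η * r t k + η ^ 2 * (r t k) ^ 2)))) -
          ∑ η ∈ Γ, ∑ k, Q η k * ∑ t ∈ Finset.Icc I1 I2,
            (-η * r t k + η ^ 2 * (r t k) ^ 2)) := by
  -- per-round: log of the mixed exponential is nonpositive
  have hlog : ∀ t : ℕ, Real.log (∑ η ∈ Γ, ∑ k,
      P t η k * Real.exp (-(-η * r t k + η ^ 2 * (r t k) ^ 2))) ≤ 0 := by
    intro t
    set Z := ∑ η ∈ Γ, ∑ j, P t η j * η with hZdef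
    have hZpos : 0 < Z := hPη t
    have hwnn : ∀ j, 0 ≤ w t j := by
      intro j
      rw [hw]
      exact div_nonneg (Finset.sum_nonneg fun η hη =>
        mul_nonneg (hP0 t η j) (hΓ η hη).1) hZpos.le
    have hwsum : ∑ j, w t j = 1 := by
      simp only [hw]
      rw [← Finset.sum_div, Finset.sum_comm]
      exact div_self hZpos.ne'
    have hS0 : 0 ≤ ∑ j, w t j * l t j :=
      Finset.sum_nonneg fun j _ => mul_nonneg (hwnn j) (hl t j).1
    have hS1 : ∑ j, w t j * l t j ≤ 1 := by
      calc ∑ j, w t j * l t j ≤ ∑ j, w t j * 1 :=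
            Finset.sum_le_sum fun j _ =>
              mul_le_mul_of_nonneg_left (hl t j).2 (hwnn j)
        _ = 1 := by simpa using hwsum
    have hrabs : ∀ k, |r t k| ≤ 1 := by
      intro k
      rw [hr, abs_le]
      constructor <;> nlinarith [(hl t k).1, (hl t k).2]
    have hwZ : ∀ k, w t k * Z = ∑ η ∈ Γ, P t η k * η := by
      intro k; rw [hw, ← hZdef]; exact div_mul_cancel₀ _ hZpos.ne'
    have hB : ∑ η ∈ Γ, ∑ k, P t η k * η * r t k = 0 := by
      rw [Finset.sum_comm]
      have step : ∀ k : Fin K, ∑ η ∈ Γ, P t η k * η * r t k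
          = (w t k * Z) * r t k := by
        intro k; rw [hwZ, Finset.sum_mul]
      rw [Finset.sum_congr rfl fun k _ => step k]
      have expand : ∀ k : Fin K, (w t k * Z) * r t k
          = (Z * (∑ j, w t j * l t j)) * w t k - Z * (w t k * l t k) := by
        intro k; rw [hr]; ring
      rw [Finset.sum_congr rfl fun k _ => expand k, Finset.sum_sub_distrib,
        ← Finset.mul_sum, ← Finset.mul_sum, hwsum]
      ring
    have hA : ∑ η ∈ Γ, ∑ k, P t η k * Real.exp (-(-η * r t k + η ^ 2 * (r t k) ^ 2)) ≤ 1 := by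
      have bound : ∀ η ∈ Γ, ∀ k : Fin K,
          P t η k * Real.exp (-(-η * r t k + η ^ 2 * (r t k) ^ 2))
            ≤ P t η k * (1 + η * r t k) := by
        intro η hη k
        apply mul_le_mul_of_nonneg_left _ (hP0 t η k)
        have harg : -(-η * r t k + η ^ 2 * (r t k) ^ 2)
            = (η * r t k) - (η * r t k)^2 := by ring
        rw [harg]
        apply exp_sub_sq_le_one_add
        rw [abs_mul]
        calc |η| * |r t k| ≤ (1/2) * 1 := by
              apply mul_le_mul _ (hrabs k) (abs_nonneg _) (by norm_num)
              rw [abs_of_nonneg (hΓ η hη).1]; exact (hΓ η hη).2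
          _ = 1/2 := by norm_num
      calc ∑ η ∈ Γ, ∑ k, P t η k * Real.exp (-(-η * r t k + η ^ 2 * (r t k) ^ 2))
          ≤ ∑ η ∈ Γ, ∑ k, P t η k * (1 + η * r t k) :=
            Finset.sum_le_sum fun η hη =>
              Finset.sum_le_sum fun k _ => bound η hη k
        _ = (∑ η ∈ Γ, ∑ k, P t η k) + ∑ η ∈ Γ, ∑ k, P t η k * η * r t k := by
            rw [← Finset.sum_add_distrib]
            apply Finset.sum_congr rfl; intro η _
            rw [← Finset.sum_add_distrib]
            apply Finset.sum_congr rfl; intro k _; ring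
        _ = 1 := by rw [hP1 t, hB]; ring
    apply Real.log_nonpos _ hA
    exact Finset.sum_nonneg fun η _ => Finset.sum_nonneg fun k _ =>
      mul_nonneg (hP0 t η k) (Real.exp_pos _).le
  have hlogsum : ∑ t ∈ Finset.Icc I1 I2, Real.log (∑ η ∈ Γ, ∑ k,
      P t η k * Real.exp (-(-η * r t k + η ^ 2 * (r t k) ^ 2))) ≤ 0 :=
    Finset.sum_nonpos fun t _ => hlog t
  -- algebraic identity
  have hid : (∑ η ∈ Γ, ∑ k, Q η k * (η * ∑ t ∈ Finset.Icc I1 I2, r t k))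
      + (∑ η ∈ Γ, ∑ k, Q η k * ∑ t ∈ Finset.Icc I1 I2,
          (-η * r t k + η ^ 2 * (r t k) ^ 2))
      = ∑ η ∈ Γ, ∑ k, Q η k * (η ^ 2 * ∑ t ∈ Finset.Icc I1 I2, (r t k) ^ 2) := by
    rw [← Finset.sum_add_distrib]
    apply Finset.sum_congr rfl; intro η _
    rw [← Finset.sum_add_distrib]
    apply Finset.sum_congr rfl; intro k _
    have h1 : ∑ t ∈ Finset.Icc I1 I2, (-η * r t k + η ^ 2 * (r t k) ^ 2)
        = -η * (∑ t ∈ Finset.Icc I1 I2, r t k)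
          + η ^ 2 * ∑ t ∈ Finset.Icc I1 I2, (r t k) ^ 2 := by
      rw [Finset.sum_add_distrib, ← Finset.mul_sum, ← Finset.mul_sum]
    rw [h1]; ring
  linarith
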